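/- arXiv:math/0109069 — 2 statements merged into one kernel-verified Lean document; each statement's English description precedes it below -/
import Mathlib

section
/- For even m = 2w, the vertex growth series of the tessellation graph X_{ℓ,m} satisfies F_{ℓ,m}(X) = (1 + 2X + ⋯ + 2X^{w−1} + X^w)/(1 − (ℓ−2)X − ⋯ − (ℓ−2)X^{w−1} + X^w). Equivalently, the sequence a_n = γ(n) of vertices at distance n from the base point satisfies the linear recurrence determined by this rational function: (1 + 2X + ⋯ + 2X^{w−1} + X^w) = (Σ a_n X^n)·(1 − (ℓ−2)X − ⋯ − (ℓ−2)X^{w−1} + X^w) as formal power series. -/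
open Finset PowerSeries

/-- Cone-type counting sequence for `X_{ℓ,m}` with even `m = 2w`:
`coneCount ℓ w n t` is the number of vertices of cone type `t` at distance `n`
from the base point, where type-`w` vertices are counted twice (once from each
of their two predecessors), and contributions from type-`w` vertices are
accordingly halved. Types: the base point has type `0` and `ℓ` successors of
type `1`; a vertex of type `t` with `0 < t < w` has `ℓ-3` successors of type
`1`, one of type `2`, one of type `t+1`; a vertex of type `w` has `ℓ-4`
successors of type `1` and two of type `2`. -/
def coneCount (ℓ w : ℕ) : ℕ → ℕ → ℚ
  | 0, t => if t = 0 then 1 else 0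
  | n + 1, t =>
    if t = 1 then
      (ℓ : ℚ) * coneCount ℓ w n 0
        + ((ℓ : ℚ) - 3) * ∑ s ∈ Finset.Ico 1 w, coneCount ℓ w n s
        + ((ℓ : ℚ) - 4) * (coneCount ℓ w n w / 2)
    else if t = 2 then
      coneCount ℓ w n 1 + (∑ s ∈ Finset.Ico 1 w, coneCount ℓ w n s)
        + coneCount ℓ w n w
    else if 3 ≤ t ∧ t ≤ w then coneCount ℓ w n (t - 1)
    else 0

/-- Total number of vertices at distance `n` (type-`w` vertices, being
double-counted by `coneCount`, contribute with weight `1/2`). -/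
def vertexCount (ℓ w n : ℕ) : ℚ :=
  (∑ t ∈ Finset.range w, coneCount ℓ w n t) + coneCount ℓ w n w / 2

/-!
Write `B_t = ∑ₙ coneCount ℓ w n t Xⁿ`. The cone-type recursion is a linear system for these
series: `B_0 = 1`, `B_t = X B_{t-1}` for `3 ≤ t ≤ w` (so `B_t = X^{t-2} B_2`), and `B_1`, `B_2`
are `X` times explicit combinations of `1`, `B_1`, `B_2` with geometric sums as coefficients.
Eliminating `B_1` (after multiplying by `X`) and using `(1 + X + ⋯ + X^{w-3})(1 - X) = 1 - X^{w-2}`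
gives `B_2 D = 2ℓX²`, hence `B_1 D = ℓX(1 - X - ⋯ - X^{w-1})`, for the denominator `D`. Since
`F = 1 + ∑_{0<t<w} B_t + B_w / 2`, the same geometric identity turns `F D` into the numerator.
-/

instance PowerSeries.instCharZero {R : Type*} [Semiring R] [CharZero R] : CharZero R⟦X⟧ :=
  RingHom.charZero (constantCoeff (R := R))

theorem PowerSeries.coeff_natCast_mul {R : Type*} [Semiring R] (k n : ℕ) (f : R⟦X⟧) :
    coeff n ((k : R⟦X⟧) * f) = k * coeff n f := by
  rw [← map_natCast C, coeff_C_mul]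

theorem PowerSeries.coeff_ofNat_mul {R : Type*} [Semiring R] (k n : ℕ) [k.AtLeastTwo]
    (f : R⟦X⟧) : coeff n ((ofNat(k) : R⟦X⟧) * f) = ofNat(k) * coeff n f := by
  rw [← map_ofNat C, coeff_C_mul]

theorem sum_Ico_one_pow {R : Type*} [Semiring R] (x : R) (n : ℕ) :
    ∑ i ∈ Ico 1 (n + 1), x ^ i = x * ∑ i ∈ range n, x ^ i := by
  simp [sum_Ico_eq_sum_range, mul_sum, pow_succ', add_comm 1]

noncomputable def coneSeries (ℓ w t : ℕ) : ℚ⟦X⟧ := mk fun n => coneCount ℓ w n t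

theorem coneSeries_zero (ℓ w : ℕ) : coneSeries ℓ w 0 = 1 := by
  ext (_ | n) <;> simp [coneSeries, coneCount, coeff_one]

theorem two_mul_coneSeries_one (ℓ w : ℕ) :
    2 * coneSeries ℓ w 1 = X * (2 * (ℓ : ℚ⟦X⟧) * coneSeries ℓ w 0
      + 2 * ((ℓ : ℚ⟦X⟧) - 3) * ∑ s ∈ Ico 1 w, coneSeries ℓ w s
      + ((ℓ : ℚ⟦X⟧) - 4) * coneSeries ℓ w w) := by
  ext (_ | n)
  · simp [coneSeries, coneCount]
  · simp only [coeff_succ_X_mul, mul_assoc, sub_mul, map_add, map_sub, map_sum,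
      coeff_natCast_mul, coeff_ofNat_mul, coneSeries, coeff_mk, coneCount, if_true]
    ring

theorem coneSeries_two (ℓ w : ℕ) :
    coneSeries ℓ w 2
      = X * (coneSeries ℓ w 1 + ∑ s ∈ Ico 1 w, coneSeries ℓ w s + coneSeries ℓ w w) := by
  ext (_ | n) <;> simp [coeff_succ_X_mul, coneSeries, coneCount]

theorem coneSeries_eq_X_mul {ℓ w t : ℕ} (h3t : 3 ≤ t) (htw : t ≤ w) :
    coneSeries ℓ w t = X * coneSeries ℓ w (t - 1) := by
  ext (_ | n)
  · simp [coneSeries, coneCount, show t ≠ 0 by omega]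
  · simp [coeff_succ_X_mul, coneSeries, coneCount, h3t, htw, show t ≠ 1 by omega,
      show t ≠ 2 by omega]

theorem coneSeries_eq_X_pow_mul {ℓ w t : ℕ} (h2t : 2 ≤ t) (htw : t ≤ w) :
    coneSeries ℓ w t = X ^ (t - 2) * coneSeries ℓ w 2 := by
  induction t, h2t using Nat.le_induction with
  | base => simp
  | succ t h2t ih =>
    rw [coneSeries_eq_X_mul (by omega) htw, Nat.add_sub_cancel, ih (by omega), ← mul_assoc,
      ← pow_succ', Nat.sub_add_comm h2t]

theorem sum_Ico_coneSeries (ℓ k : ℕ) :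
    ∑ s ∈ Ico 1 (k + 2), coneSeries ℓ (k + 2) s
      = coneSeries ℓ (k + 2) 1 + (∑ i ∈ range k, X ^ i) * coneSeries ℓ (k + 2) 2 := by
  rw [sum_eq_sum_Ico_succ_bot (by omega), sum_Ico_eq_sum_range, sum_mul]
  congr 1
  refine sum_congr (by simp) fun i hi => ?_
  rw [coneSeries_eq_X_pow_mul (by omega) (by simp at hi; omega), Nat.add_sub_cancel_left]

theorem two_mul_mk_vertexCount (ℓ w : ℕ) (hw : 1 ≤ w) :
    2 * mk (vertexCount ℓ w)
      = 2 * coneSeries ℓ w 0 + 2 * ∑ s ∈ Ico 1 w, coneSeries ℓ w s + coneSeries ℓ w w := by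
  ext n
  simp only [vertexCount, coneSeries, coeff_ofNat_mul, map_add, map_sum, coeff_mk,
    range_eq_Ico, sum_eq_sum_Ico_succ_bot hw]
  ring

theorem two_mul_coneSeries_one' (ℓ k : ℕ) :
    2 * coneSeries ℓ (k + 2) 1 = X * (2 * (ℓ : ℚ⟦X⟧)
      + 2 * ((ℓ : ℚ⟦X⟧) - 3)
        * (coneSeries ℓ (k + 2) 1 + (∑ i ∈ range k, X ^ i) * coneSeries ℓ (k + 2) 2)
      + ((ℓ : ℚ⟦X⟧) - 4) * (X ^ k * coneSeries ℓ (k + 2) 2)) := by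
  rw [two_mul_coneSeries_one, coneSeries_zero, sum_Ico_coneSeries, mul_one,
    coneSeries_eq_X_pow_mul (by omega) le_rfl, Nat.add_sub_cancel]

theorem coneSeries_two' (ℓ k : ℕ) :
    coneSeries ℓ (k + 2) 2 = X * (2 * coneSeries ℓ (k + 2) 1
      + (∑ i ∈ range k, X ^ i + X ^ k) * coneSeries ℓ (k + 2) 2) := by
  conv_lhs => rw [coneSeries_two, sum_Ico_coneSeries, coneSeries_eq_X_pow_mul (by omega) le_rfl,
    Nat.add_sub_cancel]
  ring

noncomputable def growthDenominator (ℓ w : ℕ) : ℚ⟦X⟧ :=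
  1 - ((ℓ : ℚ) - 2) • (∑ k ∈ Ico 1 w, X ^ k) + X ^ w

theorem growthDenominator_add_two (ℓ k : ℕ) :
    growthDenominator ℓ (k + 2)
      = 1 - ((ℓ : ℚ⟦X⟧) - 2) * (X * (∑ i ∈ range k, X ^ i + X ^ k)) + X ^ (k + 2) := by
  rw [growthDenominator, Algebra.smul_def, map_sub, map_natCast, map_ofNat, sum_Ico_one_pow,
    sum_range_succ]

theorem coneSeries_two_mul_growthDenominator (ℓ k : ℕ) :
    coneSeries ℓ (k + 2) 2 * growthDenominator ℓ (k + 2) = 2 * (ℓ : ℚ⟦X⟧) * X ^ 2 := by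
  rw [growthDenominator_add_two]
  linear_combination (1 - ((ℓ : ℚ⟦X⟧) - 3) * X) * coneSeries_two' ℓ k
    + X * two_mul_coneSeries_one' ℓ k
    - ((ℓ : ℚ⟦X⟧) - 3) * X * coneSeries ℓ (k + 2) 2 * geom_sum_mul_neg (X : ℚ⟦X⟧) k

theorem coneSeries_one_mul_growthDenominator (ℓ k : ℕ) :
    coneSeries ℓ (k + 2) 1 * growthDenominator ℓ (k + 2)
      = (ℓ : ℚ⟦X⟧) * X * (1 - X * (∑ i ∈ range k, X ^ i + X ^ k)) := by
  refine mul_left_cancel₀ (mul_ne_zero two_ne_zero X_ne_zero) ?_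
  linear_combination (-growthDenominator ℓ (k + 2)) * coneSeries_two' ℓ k
    + (1 - X * (∑ i ∈ range k, X ^ i + X ^ k)) * coneSeries_two_mul_growthDenominator ℓ k

theorem mk_vertexCount_mul_growthDenominator (ℓ k : ℕ) :
    mk (vertexCount ℓ (k + 2)) * growthDenominator ℓ (k + 2)
      = 1 + ∑ i ∈ Ico 1 (k + 2), 2 * X ^ i + X ^ (k + 2) := by
  have h2F := two_mul_mk_vertexCount ℓ (k + 2) (by omega)
  rw [coneSeries_zero, sum_Ico_coneSeries, coneSeries_eq_X_pow_mul (by omega) le_rfl,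
    Nat.add_sub_cancel] at h2F
  rw [← mul_sum, sum_Ico_one_pow, sum_range_succ]
  refine mul_left_cancel₀ two_ne_zero ?_
  linear_combination growthDenominator ℓ (k + 2) * h2F + 2 * growthDenominator_add_two ℓ k
    + 2 * coneSeries_one_mul_growthDenominator ℓ k
    + (2 * ∑ i ∈ range k, X ^ i + X ^ k) * coneSeries_two_mul_growthDenominator ℓ k
    - 2 * ℓ * X * geom_sum_mul_neg (X : ℚ⟦X⟧) k

theorem growth_series_vertices_general (ℓ w : ℕ) (hw : 3 ≤ w) :
    (PowerSeries.mk fun n => vertexCount ℓ w n) *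
        (1 - ((ℓ : ℚ) - 2) • (∑ k ∈ Finset.Ico 1 w, (PowerSeries.X : PowerSeries ℚ) ^ k)
          + (PowerSeries.X : PowerSeries ℚ) ^ w)
      = 1 + (∑ k ∈ Finset.Ico 1 w, 2 * (PowerSeries.X : PowerSeries ℚ) ^ k)
          + (PowerSeries.X : PowerSeries ℚ) ^ w := by
  obtain ⟨k, rfl⟩ : ∃ k, w = k + 2 := ⟨w - 2, by omega⟩
  exact mk_vertexCount_mul_growthDenominator ℓ k

/-- For even `m = 2w`, the vertex growth series of `X_{ℓ,m}` satisfies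
`F_{ℓ,m}(X) · (1 - (ℓ-2)X - ⋯ - (ℓ-2)X^{w-1} + X^w) = 1 + 2X + ⋯ + 2X^{w-1} + X^w`
as formal power series. -/
theorem growth_series_vertices (ℓ w : ℕ) (hℓ : 3 ≤ ℓ) (hw : 3 ≤ w) :
    (PowerSeries.mk fun n => vertexCount ℓ w n) *
        (1 - ((ℓ : ℚ) - 2) • (∑ k ∈ Finset.Ico 1 w, (PowerSeries.X : PowerSeries ℚ) ^ k)
          + (PowerSeries.X : PowerSeries ℚ) ^ w)
      = 1 + (∑ k ∈ Finset.Ico 1 w, 2 * (PowerSeries.X : PowerSeries ℚ) ^ k)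
          + (PowerSeries.X : PowerSeries ℚ) ^ w :=
  growth_series_vertices_general ℓ w hw
end

section
/- (Kesten) For the simple random walk on a connected d-regular graph Γ, the spectral radius μ = limsup_n (p^{(n)}(x,x))^{1/n} satisfies 2√(d−1)/d ≤ μ ≤ 1, with equality μ = 2√(d−1)/d if Γ is the d-regular tree. -/
/-!
There are at most `d ^ n` walks of length `n` from `x`, so `μ ≤ 1`. The other two bounds compare
`Γ` with the `d`-regular tree, in which every vertex but the root has `d - 1` children.

Closed walks in the tree push down injectively to closed walks in `Γ`. We push down those given by
a Dyck path of semilength `m` with a label in `Fin (d - 1)` on each up-step: keeping a stack that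
holds the image of the tree path back to `x`, an up-step moves to the labelled neighbour other
than the vertex below on the stack and a down-step pops. Hence there are at least
`catalan m * (d - 1) ^ m ≥ 4 ^ m * (d - 1) ^ m / (2m + 1) ^ 2` closed walks of length `2m`, and
`μ ≥ 2 √(d - 1) / d`.

If `Γ` is a tree, conversely, record for each step of a closed walk whether it moves away from `x`
and, if so, to which child; the `d`-th child of the root is coded like a step towards `x` but
carries a dummy label. This determines the walk and uses `n / 2` labels, so there are at most
`2 ^ n * (d - 1) ^ (n / 2) ≤ (2 √(d - 1)) ^ n` closed walks of length `n`.
-/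

open Filter Function

namespace Kesten

variable {α : Type*}

/-- The stack height, starting at `h + 1`, stays positive under `r` (`none` pops, `some _`
pushes) and ends at `1`. -/
def Balanced : ℕ → List (Option α) → Prop
  | h, [] => h = 0
  | 0, none :: _ => False
  | h + 1, none :: r => Balanced h r
  | h, some _ :: r => Balanced (h + 1) r

def labelSteps : List DyckStep → List α → List (Option α)
  | [], _ => []
  | .D :: w, q => none :: labelSteps w q
  | .U :: w, ℓ :: q => some ℓ :: labelSteps w q
  | .U :: _, [] => []

lemma map_labelSteps : ∀ (w : List DyckStep) (q : List α), q.length = w.count .U →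
    (labelSteps w q).map (Option.elim · .D fun _ => .U) = w
  | [], _, _ => rfl
  | .D :: w, q, hq => by simpa [labelSteps] using map_labelSteps w q (by simpa using hq)
  | .U :: w, _ :: q, hq => by simpa [labelSteps] using map_labelSteps w q (by simpa using hq)
  | .U :: _, [], hq => by simp at hq

lemma reduceOption_labelSteps : ∀ (w : List DyckStep) (q : List α), q.length = w.count .U →
    (labelSteps w q).reduceOption = q
  | [], q, hq => by simp_all [labelSteps]
  | .D :: w, q, hq => by
    simpa [labelSteps, List.reduceOption_cons_of_none] using
      reduceOption_labelSteps w q (by simpa using hq)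
  | .U :: w, _ :: q, hq => by
    simpa [labelSteps, List.reduceOption_cons_of_some] using
      reduceOption_labelSteps w q (by simpa using hq)
  | .U :: _, [], hq => by simp at hq

lemma balanced_labelSteps : ∀ (w : List DyckStep) (q : List α) (h : ℕ),
    (∀ i, (w.take i).count .D ≤ h + (w.take i).count .U) → w.count .D = h + w.count .U →
    q.length = w.count .U → Balanced h (labelSteps w q)
  | [], _, _, _, hw, _ => by simpa [labelSteps, Balanced] using hw.symm
  | .D :: w, q, h, hpre, hw, hq => by
    obtain ⟨h, rfl⟩ : ∃ h', h = h' + 1 := ⟨h - 1, by have := hpre 1; simp at this; omega⟩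
    refine balanced_labelSteps w q h (fun i => ?_) (by simp at hw; omega) (by simpa using hq)
    have := hpre (i + 1)
    simp at this
    omega
  | .U :: w, _ :: q, h, hpre, hw, hq => by
    refine balanced_labelSteps w q (h + 1) (fun i => ?_) (by simp at hw; omega)
      (by simpa using hq)
    have := hpre (i + 1)
    simp at this
    omega
  | .U :: _, [], _, _, _, hq => by simp at hq

lemma balanced_labelSteps_dyckWord (w : DyckWord) (q : List α)
    (hq : q.length = w.semilength) : Balanced 0 (labelSteps w.toList q) :=
  balanced_labelSteps _ _ 0 (by simpa using w.count_D_le_count_U)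
    (by simpa using w.count_U_eq_count_D.symm) hq

lemma four_pow_le_mul_catalan (m : ℕ) : 4 ^ m ≤ (2 * m + 1) * ((m + 1) * catalan m) := by
  rw [succ_mul_catalan_eq_centralBinom, Nat.centralBinom_eq_two_mul_choose]
  exact Nat.four_pow_le_two_mul_add_one_mul_central_binom m

lemma limsup_rpow_inv_le {f : ℕ → ℝ} {c : ℝ} (hf : ∀ n, 0 ≤ f n) (hc : 0 ≤ c)
    (h : ∀ n, f n ≤ c ^ n) : limsup (fun n : ℕ => f n ^ (n : ℝ)⁻¹) atTop ≤ c := by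
  refine limsup_le_of_le
    (isBoundedUnder_of ⟨0, fun n => Real.rpow_nonneg (hf n) _⟩).isCoboundedUnder_le ?_
  filter_upwards [eventually_ne_atTop 0] with n hn
  calc f n ^ (n : ℝ)⁻¹ ≤ (c ^ n) ^ (n : ℝ)⁻¹ := Real.rpow_le_rpow (hf n) (h n) (by positivity)
    _ = c := Real.pow_rpow_inv_natCast hc hn

lemma eventually_add_one_pow_lt_pow (k : ℕ) {r : ℝ} (hr : 1 < r) :
    ∀ᶠ n : ℕ in atTop, ((n : ℝ) + 1) ^ k < r ^ n := by
  have hr0 : 0 < r := zero_lt_one.trans hr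
  have h := ((tendsto_pow_const_div_const_pow_of_one_lt k hr).comp
    (tendsto_add_atTop_nat 1)).eventually_lt_const (inv_pos.mpr hr0)
  filter_upwards [h] with n hn
  have hr' : r⁻¹ * r ^ (n + 1) = r ^ n := by rw [pow_succ]; field_simp
  rw [Function.comp_apply, div_lt_iff₀ (by positivity), hr'] at hn
  exact_mod_cast hn

lemma le_limsup_rpow_inv {f : ℕ → ℝ} {ρ : ℝ} (k : ℕ) (hf : ∀ n, 0 ≤ f n) (hf1 : ∀ n, f n ≤ 1)
    (h : ∀ n : ℕ, Even n → ρ ^ n ≤ ((n : ℝ) + 1) ^ k * f n) :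
    ρ ≤ limsup (fun n : ℕ => f n ^ (n : ℝ)⁻¹) atTop := by
  have hbdd : IsBoundedUnder (· ≤ ·) atTop fun n : ℕ => f n ^ (n : ℝ)⁻¹ :=
    isBoundedUnder_of ⟨1, fun n => Real.rpow_le_one (hf n) (hf1 n) (by positivity)⟩
  refine le_of_forall_lt_imp_le_of_dense fun c hc => ?_
  rcases le_or_gt c 0 with hc0 | hc0
  · exact le_limsup_of_frequently_le
      (Frequently.of_forall fun n => hc0.trans (Real.rpow_nonneg (hf n) _)) hbdd
  obtain ⟨N, hN⟩ := eventually_atTop.1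
    (eventually_add_one_pow_lt_pow k ((one_lt_div hc0).mpr hc))
  refine le_limsup_of_frequently_le
    (frequently_atTop.2 fun a => ⟨2 * (a + N + 1), by omega, ?_⟩) hbdd
  set n := 2 * (a + N + 1)
  have hcn : c ^ n < f n := by
    have h1 := hN n (by omega)
    rw [div_pow, lt_div_iff₀ (by positivity)] at h1
    exact lt_of_mul_lt_mul_left (h1.trans_le (h n (even_two_mul _))) (by positivity)
  calc c = (c ^ n) ^ (n : ℝ)⁻¹ := (Real.pow_rpow_inv_natCast hc0.le (by omega)).symm
    _ ≤ f n ^ (n : ℝ)⁻¹ := Real.rpow_le_rpow (by positivity) hcn.le (by positivity)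

end Kesten

namespace SimpleGraph

open Kesten

variable {V : Type*} {Γ : SimpleGraph V} {K : ℕ}

lemma nonempty_neighborSet_equiv_fin {d : ℕ} (hd : d ≠ 0)
    (hreg : ∀ v, (Γ.neighborSet v).ncard = d) : Nonempty (∀ v, Γ.neighborSet v ≃ Fin d) :=
  ⟨fun v =>
    have : Finite (Γ.neighborSet v) := Set.finite_of_ncard_ne_zero (hreg v ▸ hd)
    Finite.equivFinOfCardEq ((Nat.card_coe_set_eq _).trans (hreg v))⟩

lemma card_finsetWalkLength_le [DecidableEq V] [Γ.LocallyFinite] {d : ℕ}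
    (hdeg : ∀ v, Γ.degree v ≤ d) (n : ℕ) (u v : V) :
    (Γ.finsetWalkLength n u v).card ≤ d ^ n := by
  induction n generalizing u with
  | zero =>
    unfold finsetWalkLength
    split_ifs with h
    · subst h; simp
    · simp
  | succ n ih =>
    calc (Γ.finsetWalkLength (n + 1) u v).card
        ≤ ∑ w : Γ.neighborSet u, (Γ.finsetWalkLength n w v).card := by
          rw [finsetWalkLength]
          exact Finset.card_biUnion_le.trans (by simp)
      _ ≤ ∑ _w : Γ.neighborSet u, d ^ n := Finset.sum_le_sum fun w _ => ih w
      _ ≤ d ^ (n + 1) := by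
          rw [Finset.sum_const, Finset.card_univ, card_neighborSet_eq_degree, smul_eq_mul,
            pow_succ']
          exact Nat.mul_le_mul_right _ (hdeg u)

lemma card_walk_length_le [Γ.LocallyFinite] {d : ℕ} (hdeg : ∀ v, Γ.degree v ≤ d) (n : ℕ)
    (u v : V) : Nat.card {w : Γ.Walk u v // w.length = n} ≤ d ^ n := by
  classical
  rw [Nat.card_eq_fintype_card]
  exact (Γ.card_set_walk_length_eq u v n).trans_le (card_finsetWalkLength_le hdeg n u v)

section NeighbourCoding

variable (e : ∀ v : V, Γ.neighborSet v ≃ Fin (K + 1))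

open scoped Classical in
/-- `none` codes `p` if `p` is a neighbour of `u`, and otherwise the neighbour of index
`Fin.last K`. -/
noncomputable def nbrEquiv (u p : V) : Γ.neighborSet u ≃ Option (Fin K) :=
  (e u).trans (finSuccEquiv' (if h : Γ.Adj u p then e u ⟨p, h⟩ else Fin.last K))

lemma nbrEquiv_eq_none_iff {u p : V} (h : Γ.Adj u p) {w : Γ.neighborSet u} :
    nbrEquiv e u p w = none ↔ (w : V) = p := by
  rw [nbrEquiv, dif_pos h, Equiv.trans_apply, finSuccEquiv'_eq_none, (e u).apply_eq_iff_eq,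
    eq_comm, Subtype.ext_iff]

noncomputable def nextNbr (u p : V) (ℓ : Fin K) : V := ((nbrEquiv e u p).symm (some ℓ) : V)

variable {e}

lemma adj_nextNbr {u p : V} {ℓ : Fin K} : Γ.Adj u (nextNbr e u p ℓ) :=
  ((nbrEquiv e u p).symm _).2

lemma nextNbr_ne {u p : V} {ℓ : Fin K} : nextNbr e u p ℓ ≠ p := by
  intro h
  by_cases hp : Γ.Adj u p
  · simpa using (nbrEquiv_eq_none_iff e hp).mpr h
  · exact hp (h ▸ adj_nextNbr)

lemma nextNbr_injective {u p : V} : Injective (nextNbr e u p) := fun _ _ h =>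
  Option.some_injective _ ((nbrEquiv e u p).symm.injective (Subtype.ext h))

end NeighbourCoding

section StackWalk

variable (e : ∀ v : V, Γ.neighborSet v ≃ Fin (K + 1))

/-- The stack holds the image in `Γ` of the path in the `(K + 1)`-regular tree from the current
position back to the root. -/
noncomputable def stackStep : List V → Option (Fin K) → List V
  | S, none => S.tail
  | [], some _ => []
  | u :: S, some ℓ => nextNbr e u (S.headD u) ℓ :: u :: S

noncomputable def stackTrace (x : V) : List V → List (Option (Fin K)) → List V
  | _, [] => []
  | S, a :: r => (stackStep e S a).headD x :: stackTrace x (stackStep e S a) r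

lemma length_stackTrace (x : V) :
    ∀ (S : List V) (r : List (Option (Fin K))), (stackTrace e x S r).length = r.length
  | _, [] => rfl
  | S, _ :: r => by simp [stackTrace, length_stackTrace _ _ r]

lemma isChain_stackTrace (x : V) :
    ∀ (r : List (Option (Fin K))) (u : V) (t : List V) (h : ℕ),
      Balanced h r → (u :: t).IsChain Γ.Adj → (u :: t).getLast? = some x → t.length = h →
      (u :: stackTrace e x (u :: t) r).IsChain Γ.Adj ∧
        (u :: stackTrace e x (u :: t) r).getLast? = some x
  | [], u, t, h, hb, hc, hl, ht => by
    obtain rfl : t = [] := List.eq_nil_of_length_eq_zero (ht.trans hb)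
    exact ⟨hc, hl⟩
  | none :: r, u, [], 0, hb, _, _, _ => hb.elim
  | none :: r, u, p :: t, h + 1, hb, hc, hl, ht => by
    have hc' := List.isChain_cons_cons.mp hc
    have ih := isChain_stackTrace x r p t h hb hc'.2 (by rwa [List.getLast?_cons_cons] at hl)
      (by simpa using ht)
    exact ⟨List.isChain_cons_cons.mpr ⟨hc'.1, ih.1⟩, by simpa [stackTrace, stackStep] using ih.2⟩
  | some ℓ :: r, u, t, h, hb, hc, hl, ht => by
    have ih := isChain_stackTrace x r (nextNbr e u (t.headD u) ℓ) (u :: t) (h + 1) hb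
      (List.isChain_cons_cons.mpr ⟨adj_nextNbr.symm, hc⟩) (by rwa [List.getLast?_cons_cons])
      (by simpa using ht)
    exact ⟨List.isChain_cons_cons.mpr ⟨adj_nextNbr, ih.1⟩,
      by simpa [stackTrace, stackStep] using ih.2⟩

lemma stackStep_headD_injective (x : V) {u : V} {t : List V} {a₁ a₂ : Option (Fin K)}
    (h₁ : a₁ = none → t ≠ []) (h₂ : a₂ = none → t ≠ [])
    (h : (stackStep e (u :: t) a₁).headD x = (stackStep e (u :: t) a₂).headD x) : a₁ = a₂ := by
  rcases a₁ with _ | ℓ₁ <;> rcases a₂ with _ | ℓ₂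
  · rfl
  · obtain ⟨p, t, rfl⟩ := List.exists_cons_of_ne_nil (h₁ rfl)
    exact (nextNbr_ne h.symm).elim
  · obtain ⟨p, t, rfl⟩ := List.exists_cons_of_ne_nil (h₂ rfl)
    exact (nextNbr_ne h).elim
  · exact congrArg some (nextNbr_injective h)

lemma stackTrace_injective (x : V) :
    ∀ (r₁ r₂ : List (Option (Fin K))) (u : V) (t : List V) (h : ℕ),
      Balanced h r₁ → Balanced h r₂ → t.length = h →
      stackTrace e x (u :: t) r₁ = stackTrace e x (u :: t) r₂ → r₁ = r₂
  | [], [], _, _, _, _, _, _, _ => rfl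
  | [], _ :: _, _, _, _, _, _, _, heq => by simp [stackTrace] at heq
  | _ :: _, [], _, _, _, _, _, _, heq => by simp [stackTrace] at heq
  | a₁ :: r₁, a₂ :: r₂, u, t, h, hb₁, hb₂, ht, heq => by
    have valid : ∀ {a : Option (Fin K)} {r}, Balanced h (a :: r) → a = none → t ≠ [] := by
      rintro a r hb rfl rfl
      subst ht
      exact hb
    rw [stackTrace, stackTrace, List.cons.injEq] at heq
    obtain rfl := stackStep_headD_injective e x (valid hb₁) (valid hb₂) heq.1
    congr 1
    rcases a₁ with _ | ℓ
    · obtain ⟨p, t, rfl⟩ := List.exists_cons_of_ne_nil (valid hb₁ rfl)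
      obtain ⟨h, rfl⟩ : ∃ h', h = h' + 1 := ⟨t.length, by simpa using ht.symm⟩
      exact stackTrace_injective x r₁ r₂ p t h hb₁ hb₂ (by simpa using ht) heq.2
    · exact stackTrace_injective x r₁ r₂ _ (u :: t) (h + 1) hb₁ hb₂ (by simpa using ht) heq.2

noncomputable def stackWalk (x : V) (r : List (Option (Fin K))) (hr : Balanced 0 r) :
    Γ.Walk x x :=
  (Walk.ofSupport _ (List.cons_ne_nil _ _)
    (isChain_stackTrace e x r x [] 0 hr (List.isChain_singleton x) rfl rfl).1).copy
    (List.head_cons ..) (List.getLast_of_mem_getLast?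
      (isChain_stackTrace e x r x [] 0 hr (List.isChain_singleton x) rfl rfl).2)

lemma length_stackWalk (x : V) (r : List (Option (Fin K))) (hr : Balanced 0 r) :
    (stackWalk e x r hr).length = r.length := by
  rw [stackWalk, Walk.length_copy, Walk.length_ofSupport, List.length_cons, length_stackTrace,
    Nat.add_sub_cancel]

lemma stackWalk_injective (x : V) {r₁ r₂ : List (Option (Fin K))} (hr₁ : Balanced 0 r₁)
    (hr₂ : Balanced 0 r₂) (h : stackWalk e x r₁ hr₁ = stackWalk e x r₂ hr₂) : r₁ = r₂ := by
  have hs := congrArg Walk.support h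
  rw [stackWalk, stackWalk, Walk.support_copy, Walk.support_copy, Walk.support_ofSupport,
    Walk.support_ofSupport, List.cons.injEq] at hs
  exact stackTrace_injective e x r₁ r₂ x [] 0 hr₁ hr₂ rfl hs.2

end StackWalk

theorem catalan_mul_pow_le_card_walk [Γ.LocallyFinite]
    (e : ∀ v : V, Γ.neighborSet v ≃ Fin (K + 1)) (x : V) (n : ℕ) :
    catalan n * K ^ n ≤ Nat.card {w : Γ.Walk x x // w.length = 2 * n} := by
  classical
  let P := {w : DyckWord // w.semilength = n} × List.Vector (Fin K) n
  have hq (z : P) : z.2.1.length = z.1.1.toList.count .U := z.2.2.trans z.1.2.symm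
  have hbal (z : P) : Balanced 0 (labelSteps z.1.1.toList z.2.1) :=
    balanced_labelSteps_dyckWord _ _ (z.2.2.trans z.1.2.symm)
  have hlen (z : P) : (labelSteps z.1.1.toList z.2.1).length = 2 * n := by
    rw [← List.length_map, map_labelSteps _ _ (hq z), ← z.1.1.two_mul_semilength_eq_length, z.1.2]
  let F : P → {w : Γ.Walk x x // w.length = 2 * n} := fun z =>
    ⟨stackWalk e x _ (hbal z), (length_stackWalk e x _ _).trans (hlen z)⟩
  have hF : Injective F := by
    rintro z₁ z₂ h
    have hr := stackWalk_injective e x (hbal z₁) (hbal z₂) (congrArg Subtype.val h)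
    have hw := congrArg (List.map (Option.elim · DyckStep.D fun _ => .U)) hr
    have hv := congrArg List.reduceOption hr
    rw [map_labelSteps _ _ (hq z₁), map_labelSteps _ _ (hq z₂)] at hw
    rw [reduceOption_labelSteps _ _ (hq z₁), reduceOption_labelSteps _ _ (hq z₂)] at hv
    exact Prod.ext (Subtype.ext (DyckWord.ext hw)) (Subtype.ext hv)
  calc catalan n * K ^ n = Nat.card P := by
        simp [P, DyckWord.card_dyckWord_semilength_eq_catalan]
    _ ≤ _ := Nat.card_le_card_of_injective F hF

section Trees

variable {x u v p : V}

lemma IsAcyclic.length_eq_dist (hG : Γ.IsAcyclic) {q : Γ.Walk u v} (hq : q.IsPath) :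
    q.length = Γ.dist u v := by
  obtain ⟨q', hq', hlen⟩ := q.reachable.exists_path_of_dist
  rw [← hlen, Subtype.mk.inj ((hG.subsingleton_path u v).elim ⟨q, hq⟩ ⟨q', hq'⟩)]

lemma exists_adj_dist_add_one_eq (hr : Γ.Reachable x u) (hu : u ≠ x) :
    ∃ p, Γ.Adj u p ∧ Γ.dist x p + 1 = Γ.dist x u := by
  obtain ⟨q, hq⟩ := hr.symm.exists_walk_length_eq_dist
  cases q with
  | nil => exact (hu rfl).elim
  | @cons _ p _ h q =>
    refine ⟨p, h, ?_⟩
    have hle : Γ.dist x p ≤ q.length := by simpa using dist_le q.reverse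
    rw [Walk.length_cons, dist_comm] at hq
    rcases h.diff_dist_adj (u := x) with h' | h' | h' <;> omega

lemma IsAcyclic.dist_eq_add_one_of_adj (hG : Γ.IsAcyclic) (hp : Γ.Adj u p)
    (hpd : Γ.dist x p + 1 = Γ.dist x u) (hv : Γ.Adj u v) (hvp : v ≠ p) :
    Γ.dist x v = Γ.dist x u + 1 := by
  have hr : Γ.Reachable x p := (Reachable.of_dist_ne_zero (by omega)).trans hp.reachable
  obtain ⟨q, hq, hql⟩ := hr.exists_path_of_dist
  have hQ : (q.concat hp.symm).IsPath :=
    (q.concat hp.symm).isPath_of_length_eq_dist (by rw [Walk.length_concat, hql, hpd])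
  -- on the geodesic `x ⟶ p ⟶ u` the only neighbour of `u` is `p`; otherwise extending it by `v`
  -- gives a path, and paths in a forest are geodesics
  by_cases hvQ : v ∈ (q.concat hp.symm).support
  · exact (hvp ((hG.eq_penultimate_of_adj_end hQ hv hvQ).trans (q.penultimate_concat _))).elim
  · rw [← hG.length_eq_dist (hQ.concat hvQ hv), Walk.length_concat, Walk.length_concat, hql, hpd]

open scoped Classical in
/-- The neighbour of `u` one step closer to `x`; junk value `u` if there is none, e.g. for
`u = x`. -/
noncomputable def parent (Γ : SimpleGraph V) (x u : V) : V :=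
  if h : ∃ p, Γ.Adj u p ∧ Γ.dist x p + 1 = Γ.dist x u then h.choose else u

lemma parent_spec (hr : Γ.Reachable x u) (hu : u ≠ x) :
    Γ.Adj u (parent Γ x u) ∧ Γ.dist x (parent Γ x u) + 1 = Γ.dist x u := by
  have h := exists_adj_dist_add_one_eq hr hu
  rw [parent, dif_pos h]
  exact h.choose_spec

end Trees

section WalkCode

variable {α : Type*} (c : ∀ u, Γ.neighborSet u → Option α) (x : V) (a₀ : α)

open scoped Classical in
/-- Each step `u ⟶ v` is recorded by the bit `(c u v).isSome` and the label `c u v`; a step coded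
`none` gets no label, except at `x`, where it gets `a₀`. -/
noncomputable def walkCode : ∀ {u v : V}, Γ.Walk u v → List Bool × List α
  | _, _, .nil => ([], [])
  | u, _, .cons h p =>
    ((c u ⟨_, h⟩).isSome :: (walkCode p).1,
      (c u ⟨_, h⟩).elim (if u = x then [a₀] else []) (fun a => [a]) ++ (walkCode p).2)

lemma length_walkCode_fst :
    ∀ {u v : V} (p : Γ.Walk u v), (walkCode c x a₀ p).1.length = p.length
  | _, _, .nil => rfl
  | _, _, .cons _ p => by simp [walkCode, length_walkCode_fst p]

variable {c} in
lemma walkCode_injective (hc : ∀ u, Injective (c u)) :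
    ∀ {u v : V} (p q : Γ.Walk u v), walkCode c x a₀ p = walkCode c x a₀ q → p = q
  | _, _, .nil, .nil, _ => rfl
  | _, _, .nil, .cons _ _, h => by simp [walkCode] at h
  | _, _, .cons _ _, .nil, h => by simp [walkCode] at h
  | u, _, .cons (v := v₁) h₁ p₁, .cons (v := v₂) h₂ p₂, h => by
    simp only [walkCode, Prod.mk.injEq, List.cons.injEq] at h
    obtain ⟨⟨hbit, hbits⟩, hlab⟩ := h
    have hstep : c u ⟨v₁, h₁⟩ = c u ⟨v₂, h₂⟩ := by
      cases h1 : c u ⟨v₁, h₁⟩ <;> cases h2 : c u ⟨v₂, h₂⟩ <;> simp_all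
    obtain rfl : v₁ = v₂ := congrArg Subtype.val (hc u hstep)
    rw [hstep, List.append_cancel_left_eq] at hlab
    rw [walkCode_injective hc p₁ p₂ (Prod.ext hbits hlab)]

end WalkCode

section TreeCount

variable (e : ∀ v : V, Γ.neighborSet v ≃ Fin (K + 1)) {x u v : V}

lemma IsAcyclic.dist_eq_add_one_of_nbrEquiv_parent_ne_none (hG : Γ.IsAcyclic)
    (hr : Γ.Reachable x u) (h : Γ.Adj u v) (hc : nbrEquiv e u (parent Γ x u) ⟨v, h⟩ ≠ none) :
    Γ.dist x v = Γ.dist x u + 1 := by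
  by_cases hu : u = x
  · subst hu
    rw [dist_self, dist_eq_one_iff_adj.mpr h]
  · obtain ⟨hp, hpd⟩ := parent_spec hr hu
    exact hG.dist_eq_add_one_of_adj hp hpd h fun hvp => hc ((nbrEquiv_eq_none_iff e hp).mpr hvp)

lemma dist_add_one_eq_of_nbrEquiv_parent_eq_none (hr : Γ.Reachable x u) (hu : u ≠ x)
    (h : Γ.Adj u v) (hc : nbrEquiv e u (parent Γ x u) ⟨v, h⟩ = none) :
    Γ.dist x v + 1 = Γ.dist x u := by
  obtain ⟨hp, hpd⟩ := parent_spec hr hu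
  have hv : v = parent Γ x u := (nbrEquiv_eq_none_iff e hp).mp hc
  rwa [hv]

lemma IsAcyclic.two_mul_length_walkCode_snd (hG : Γ.IsAcyclic) (a₀ : Fin K) :
    ∀ {u w : V} (p : Γ.Walk u w), Γ.Reachable x u →
      2 * (walkCode (fun u => nbrEquiv e u (parent Γ x u)) x a₀ p).2.length + Γ.dist x u =
        p.length + Γ.dist x w
  | _, _, .nil, _ => by simp [walkCode]
  | u, w, .cons (v := v) h p, hr => by
    have ih := hG.two_mul_length_walkCode_snd a₀ p (hr.trans h.reachable)
    simp only [walkCode, List.length_append, Walk.length_cons]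
    cases hc : nbrEquiv e u (parent Γ x u) ⟨v, h⟩ with
    | some a =>
      have := hG.dist_eq_add_one_of_nbrEquiv_parent_ne_none e hr h (by simp [hc])
      simp only [Option.elim_some, List.length_singleton]
      omega
    | none =>
      by_cases hu : u = x
      · subst hu
        have := dist_eq_one_iff_adj.mpr h
        simp only [Option.elim_none, if_pos, List.length_singleton, dist_self] at ih ⊢
        omega
      · have := dist_add_one_eq_of_nbrEquiv_parent_eq_none e hr hu h hc
        simp only [Option.elim_none, if_neg hu, List.length_nil]
        omega

end TreeCount

theorem IsAcyclic.card_walk_le (hG : Γ.IsAcyclic)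
    (e : ∀ v : V, Γ.neighborSet v ≃ Fin (K + 1)) (hK : 0 < K) (x : V)
    (n : ℕ) : Nat.card {w : Γ.Walk x x // w.length = n} ≤ 2 ^ n * K ^ (n / 2) := by
  let c : ∀ u, Γ.neighborSet u → Option (Fin K) := fun u => nbrEquiv e u (parent Γ x u)
  let code := fun w : Γ.Walk x x => walkCode c x ⟨0, hK⟩ w
  have hlen (w : {w : Γ.Walk x x // w.length = n}) : (code w.1).2.length = n / 2 := by
    have : 2 * (code w.1).2.length + Γ.dist x x = w.1.length + Γ.dist x x :=
      hG.two_mul_length_walkCode_snd e ⟨0, hK⟩ w.1 (Reachable.refl x)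
    rw [w.2] at this
    omega
  let F : {w : Γ.Walk x x // w.length = n} → List.Vector Bool n × List.Vector (Fin K) (n / 2) :=
    fun w => (⟨(code w.1).1, (length_walkCode_fst c x _ w.1).trans w.2⟩, ⟨(code w.1).2, hlen w⟩)
  have hF : Injective F := fun w₁ w₂ h => Subtype.ext <|
    walkCode_injective x _ (fun u => (nbrEquiv e u _).injective) _ _
      (Prod.ext (congrArg (·.1.1) h) (congrArg (·.2.1) h))
  calc _ ≤ Nat.card (List.Vector Bool n × List.Vector (Fin K) (n / 2)) :=
        Nat.card_le_card_of_injective F hF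
    _ = 2 ^ n * K ^ (n / 2) := by simp

noncomputable def returnProb (Γ : SimpleGraph V) (x : V) (d n : ℕ) : ℝ :=
  (Nat.card {w : Γ.Walk x x // w.length = n} : ℝ) / d ^ n

lemma returnProb_nonneg (x : V) (d n : ℕ) : 0 ≤ returnProb Γ x d n := by
  unfold returnProb
  positivity

lemma returnProb_le_one [Γ.LocallyFinite] {d : ℕ} (hdeg : ∀ v, Γ.degree v ≤ d) (x : V) (n : ℕ) :
    returnProb Γ x d n ≤ 1 :=
  div_le_one_of_le₀ (by exact_mod_cast card_walk_length_le hdeg n x x) (by positivity)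

lemma pow_le_returnProb [Γ.LocallyFinite] (e : ∀ v : V, Γ.neighborSet v ≃ Fin (K + 1)) (x : V)
    (n : ℕ) (hn : Even n) :
    (2 * √K / (K + 1)) ^ n ≤ ((n : ℝ) + 1) ^ 2 * returnProb Γ x (K + 1) n := by
  obtain ⟨m, rfl⟩ := hn
  have hcount : 4 ^ m * K ^ m ≤ (m + m + 1) ^ 2 * Nat.card {w : Γ.Walk x x // w.length = m + m} :=
    calc 4 ^ m * K ^ m ≤ (2 * m + 1) * ((m + 1) * catalan m) * K ^ m :=
          Nat.mul_le_mul_right _ (four_pow_le_mul_catalan m)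
      _ = (2 * m + 1) * (m + 1) * (catalan m * K ^ m) := by ring
      _ ≤ (m + m + 1) ^ 2 * Nat.card {w : Γ.Walk x x // w.length = m + m} :=
          Nat.mul_le_mul (by nlinarith) (two_mul m ▸ catalan_mul_pow_le_card_walk e x m)
  have hρ : (2 * √K / (K + 1)) ^ (m + m) = (4 ^ m * K ^ m : ℝ) / ((K : ℝ) + 1) ^ (m + m) := by
    rw [div_pow, mul_pow, ← two_mul, pow_mul, pow_mul, Real.sq_sqrt (Nat.cast_nonneg K)]
    norm_num
  rw [hρ, returnProb, mul_div_assoc', Nat.cast_add_one,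
    div_le_div_iff_of_pos_right (by positivity)]
  exact_mod_cast hcount

theorem IsAcyclic.returnProb_le (hG : Γ.IsAcyclic)
    (e : ∀ v : V, Γ.neighborSet v ≃ Fin (K + 1)) (hK : 0 < K) (x : V) (n : ℕ) :
    returnProb Γ x (K + 1) n ≤ (2 * √K / (K + 1)) ^ n := by
  have hsqrt : (K : ℝ) ^ (n / 2) ≤ √K ^ n :=
    calc (K : ℝ) ^ (n / 2) = √K ^ (2 * (n / 2)) := by rw [pow_mul, Real.sq_sqrt K.cast_nonneg]
      _ ≤ √K ^ n := pow_le_pow_right₀ (Real.one_le_sqrt.mpr (Nat.one_le_cast.mpr hK))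
          (Nat.mul_div_le n 2)
  rw [returnProb, div_pow, mul_pow, Nat.cast_add_one, div_le_div_iff_of_pos_right (by positivity)]
  calc (Nat.card {w : Γ.Walk x x // w.length = n} : ℝ) ≤ 2 ^ n * K ^ (n / 2) := by
        exact_mod_cast hG.card_walk_le e hK x n
    _ ≤ 2 ^ n * √K ^ n := by gcongr

end SimpleGraph

open SimpleGraph Kesten

theorem kesten_estimates_general {V : Type*} (Γ : SimpleGraph V)
    (d : ℕ) (hd : 2 ≤ d) (hreg : ∀ v : V, (Γ.neighborSet v).ncard = d)
    (x : V) (p : ℕ → ℝ)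
    (hp : ∀ n, p n = (Nat.card {w : Γ.Walk x x // w.length = n} : ℝ) / d ^ n)
    (μ : ℝ) (hμ : μ = Filter.limsup (fun n : ℕ => (p n) ^ ((n : ℝ)⁻¹)) Filter.atTop) :
    2 * Real.sqrt (d - 1) / d ≤ μ ∧ μ ≤ 1 ∧
      (Γ.IsAcyclic → μ = 2 * Real.sqrt (d - 1) / d) := by
  obtain ⟨K, rfl⟩ : ∃ K, d = K + 1 := ⟨d - 1, by omega⟩
  obtain ⟨e⟩ := nonempty_neighborSet_equiv_fin (by omega) hreg
  let _ : Γ.LocallyFinite := fun v => Fintype.ofEquiv _ (e v).symm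
  have hdeg (v : V) : Γ.degree v ≤ K + 1 := by
    rw [← card_neighborSet_eq_degree, Fintype.card_congr (e v), Fintype.card_fin]
  obtain rfl : p = returnProb Γ x (K + 1) := funext hp
  have hρ : 2 * √(((K + 1 : ℕ) : ℝ) - 1) / ((K + 1 : ℕ) : ℝ) = 2 * √K / (K + 1) := by
    push_cast
    ring_nf
  rw [hρ]
  subst hμ
  have hlower := le_limsup_rpow_inv 2 (returnProb_nonneg x _) (returnProb_le_one hdeg x)
    (pow_le_returnProb e x)
  refine ⟨hlower, limsup_rpow_inv_le (returnProb_nonneg x _) zero_le_one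
    (by simpa using returnProb_le_one hdeg x), fun hG => le_antisymm ?_ hlower⟩
  exact limsup_rpow_inv_le (returnProb_nonneg x _) (by positivity) (hG.returnProb_le e (by omega) x)

/-- Kesten: For the simple random walk on a connected `d`-regular graph
`Γ`, the spectral radius `μ = limsup_n (p⁽ⁿ⁾(x,x))^{1/n}` satisfies
`2√(d-1)/d ≤ μ ≤ 1`, with equality `μ = 2√(d-1)/d` if `Γ` is the `d`-regular tree.
Here `p⁽ⁿ⁾(x,x)`, the probability of returning to `x` in `n` steps, equals
(number of walks of length `n` from `x` to `x`) divided by `dⁿ`. -/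
theorem kesten_estimates {V : Type*} (Γ : SimpleGraph V) (hconn : Γ.Connected)
    (d : ℕ) (hd : 2 ≤ d) (hreg : ∀ v : V, (Γ.neighborSet v).ncard = d)
    (x : V) (p : ℕ → ℝ)
    (hp : ∀ n, p n = (Nat.card {w : Γ.Walk x x // w.length = n} : ℝ) / d ^ n)
    (μ : ℝ) (hμ : μ = Filter.limsup (fun n : ℕ => (p n) ^ ((n : ℝ)⁻¹)) Filter.atTop) :
    2 * Real.sqrt (d - 1) / d ≤ μ ∧ μ ≤ 1 ∧
      (Γ.IsAcyclic → μ = 2 * Real.sqrt (d - 1) / d) :=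
  kesten_estimates_general Γ d hd hreg x p hp μ hμ
end
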